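/- arXiv:1805.02175 — 2 statements merged into one kernel-verified Lean document; each statement's English description precedes it below -/
import Mathlib

section
/- Let C be the copy map, C|i⟩ = |i⟩⊗|i⟩, and let M(a) : ℂ⁴ → ℂ² be the binary H-box map M(a)|i,j⟩ = |0⟩ + a^{ij}|1⟩, i.e. the 2×4 matrix [[1,1,1,1],[1,1,1,a]], so that M(-1)|i,j⟩ = |0⟩ + (-1)^{ij}|1⟩. Then for all bits i,j, applying M(-1)⊗M(-1) to (|i⟩⊗|i⟩)⊗(|j⟩⊗|j⟩) reordered as |i,j,i,j⟩ (that is, to (id ⊗ SWAP ⊗ id)(C ⊗ C)|i,j⟩) gives (M(-1)⊗M(-1))|i,j,i,j⟩ = (|0⟩ + (-1)^{ij}|1⟩)⊗(|0⟩ + (-1)^{ij}|1⟩). -/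
open Matrix

/-- The binary H-box map `M(a) : ℂ⁴ → ℂ²` with `M(a)|i,j⟩ = |0⟩ + a^(i·j)|1⟩`. -/
noncomputable def Mbox (a : ℂ) : Matrix (Fin 2) (Fin 2 × Fin 2) ℂ :=
  fun k p => if k = 1 then a ^ (p.1.val * p.2.val) else 1

/-- bialgebra rule BA2, basic case: for all bits `i j`,
`(M(-1) ⊗ M(-1))` applied to `|i,j,i,j⟩` (grouped in pairs) equals
`(|0⟩ + (-1)^(ij)|1⟩) ⊗ (|0⟩ + (-1)^(ij)|1⟩)`. -/
theorem bialgebra_ZH (i j : Fin 2) :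
    ((Mbox (-1)).kroneckerMap (· * ·) (Mbox (-1))).mulVec
        (fun q : (Fin 2 × Fin 2) × (Fin 2 × Fin 2) => if q = ((i, j), (i, j)) then 1 else 0)
      = fun p : Fin 2 × Fin 2 =>
          (-1 : ℂ) ^ (i.val * j.val * p.1.val) * (-1 : ℂ) ^ (i.val * j.val * p.2.val) := by
  ext p
  simp [mulVec, dotProduct, Mbox, kroneckerMap, Fintype.sum_prod_type, Fin.sum_univ_two,
    Prod.ext_iff]
  fin_cases i <;> fin_cases j <;> fin_cases p <;> simp
end

section
/- Uniqueness/universality of the ZH normal form (Theorem): for any function a : {0,1}ⁿ → ℂ, the Schur (entrywise) product over all b⃗ ∈ {0,1}ⁿ of the vectors ι_b⃗ · Hₙ(a(b⃗)) equals the vector Σ_{b⃗} a(b⃗) |b⃗⟩. Consequently every vector in ℂ^(2ⁿ) is expressible in this form, and two normal forms with equal interpretations have equal coefficient functions. -/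
/-! Since `ι_b⃗` is the bit-flip permutation sending `b⃗` to the all-ones string, `ι_b⃗ · Hₙ(c)` is
`c` at `b⃗` and `1` elsewhere; so at coordinate `r⃗` every factor of the Schur product is `1`
except the one indexed by `r⃗`, which is `a(r⃗)`. -/

open Finset

/-- The NOT (bit-flip) matrix on `ℂ²`, indexed by `Bool`. -/
def NOTm : Matrix Bool Bool ℂ := fun r c => if r ≠ c then 1 else 0

/-- The indexing map `ι_b⃗ = ⊗ᵢ NOT^(1-bᵢ)`. -/
def iota {n : ℕ} (b : Fin n → Bool) : Matrix (Fin n → Bool) (Fin n → Bool) ℂ :=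
  fun r c => ∏ k, (if b k then (1 : Matrix Bool Bool ℂ) else NOTm) (r k) (c k)

/-- The arity-`n` H-box state: `c` at the all-ones coordinate, 1 elsewhere. -/
def Hvec (n : ℕ) (c : ℂ) : (Fin n → Bool) → ℂ :=
  fun b => if ∀ k, b k = true then c else 1

/-- Standard basis vector `|b⃗⟩`. -/
def ket {n : ℕ} (b : Fin n → Bool) : (Fin n → Bool) → ℂ :=
  fun r => if r = b then 1 else 0

lemma ite_one_NOTm_apply (b x y : Bool) :
    (if b then (1 : Matrix Bool Bool ℂ) else NOTm) x y = if y = (x == b) then 1 else 0 := by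
  cases b <;> cases x <;> cases y <;> simp [NOTm]

-- `r k == b k` is `r k` flipped exactly where `b k = false`.
lemma iota_apply {n : ℕ} (b r c : Fin n → Bool) :
    iota b r c = if c = fun k => r k == b k then 1 else 0 := by
  simp only [iota, ite_one_NOTm_apply, Finset.prod_boole, Finset.mem_univ, true_implies,
    funext_iff]

lemma iota_mulVec_apply {n : ℕ} (b r : Fin n → Bool) (f : (Fin n → Bool) → ℂ) :
    (iota b).mulVec f r = f fun k => r k == b k := by
  simp [Matrix.mulVec, dotProduct, iota_apply]

lemma iota_mulVec_Hvec_apply {n : ℕ} (b r : Fin n → Bool) (v : ℂ) :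
    (iota b).mulVec (Hvec n v) r = if r = b then v else 1 := by
  simp only [iota_mulVec_apply, Hvec, beq_iff_eq, funext_iff]

/-- normal form theorem: the Schur (entrywise) product over all
`b⃗ ∈ {0,1}ⁿ` of the vectors `ι_b⃗ · Hₙ(a(b⃗))` equals `Σ_b⃗ a(b⃗) |b⃗⟩`. -/
theorem normal_form (n : ℕ) (a : (Fin n → Bool) → ℂ) :
    (fun c => ∏ b : Fin n → Bool, (iota b).mulVec (Hvec n (a b)) c)
      = ∑ b : Fin n → Bool, a b • ket b := by
  funext r
  simp [iota_mulVec_Hvec_apply, ket, Finset.prod_ite_eq]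
end
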